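/- arXiv:1603.02960 — 2 statements merged into one kernel-verified Lean document; each statement's English description precedes it below -/
import Mathlib

section
/- Let F be a graph on n vertices and let v be a vertex of F of degree d(v). Then the number of induced cycles of F containing v satisfies f_v(F) ≤ C(d(v),2) · 3^{(n − d(v) − 1)/3}, where C(d(v),2) is the binomial coefficient d(v) choose 2. -/
/-!
An induced cycle through `v` is `v` together with an induced path between two neighbours
`a ≠ b` of `v` whose inner vertices are not adjacent to `v`: there are `C(d(v), 2)` choices of
`{a, b}`, and the inner vertices lie among the `n - d(v) - 1` vertices outside the closed
neighbourhood of `v`. So it suffices that at most `3^(m/3)` induced `a`–`b` paths have their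
inner vertices in a given set `M` of `m` vertices. If `a ∼ b` the only one is the edge `ab`.
Otherwise the path leaves `a` through one of the `k` neighbours `u ∈ M` of `a`, and the rest is
an induced `u`–`b` path whose inner vertices avoid all `k` of them; by induction there are at
most `k · 3^((m - k)/3) ≤ 3^(m/3)` paths, because `k ≤ 3^(k/3)`.
-/

namespace ExtremalInducedCycles

/-- The vertex set `s` induces a cycle (of length at least 3) in `G`:
the induced subgraph is connected and 2-regular. -/
def IsInducedCycle {V : Type*} (G : SimpleGraph V) (s : Set V) : Prop :=
  s.Finite ∧ 3 ≤ s.ncard ∧ (G.induce s).Connected ∧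
    ∀ v ∈ s, {w | w ∈ s ∧ G.Adj v w}.ncard = 2

/-- `f(G)`: the number of induced cycles in `G`. -/
noncomputable def numInducedCycles {V : Type*} (G : SimpleGraph V) : ℕ :=
  {s : Set V | IsInducedCycle G s}.ncard

/-- `m(n)`: the maximum number of induced cycles in an `n`-vertex graph. -/
noncomputable def maxInducedCycles (n : ℕ) : ℕ :=
  sSup {k : ℕ | ∃ G : SimpleGraph (Fin n), numInducedCycles G = k}

/-- `f_v(G)`: the number of induced cycles of `G` containing the vertex `v`. -/
noncomputable def numInducedCyclesThrough {V : Type*} (G : SimpleGraph V) (v : V) : ℕ :=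
  {s : Set V | IsInducedCycle G s ∧ v ∈ s}.ncard

/-- The degree of `v` in `G`. -/
noncomputable def vdeg {V : Type*} (G : SimpleGraph V) (v : V) : ℕ :=
  Nat.card {w : V // G.Adj v w}

section

variable {V : Type*} {G : SimpleGraph V} {s : Set V} {a b c u v w x y : V}

def nbrIn (G : SimpleGraph V) (s : Set V) (w : V) : Set V := {x | x ∈ s ∧ G.Adj w x}

def ReachIn (G : SimpleGraph V) (s : Set V) : V → V → Prop :=
  Relation.ReflTransGen fun x y => x ∈ s ∧ y ∈ s ∧ G.Adj x y

def IsInducedPath (G : SimpleGraph V) (a b : V) (s : Set V) : Prop :=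
  a ∈ s ∧ b ∈ s ∧ a ≠ b ∧ (∀ x ∈ s, ∀ y ∈ s, ReachIn G s x y) ∧
    (nbrIn G s a).ncard = 1 ∧ (nbrIn G s b).ncard = 1 ∧
    ∀ w ∈ s, w ≠ a → w ≠ b → (nbrIn G s w).ncard = 2

lemma mem_nbrIn_comm (hw : w ∈ s) (hc : c ∈ s) : c ∈ nbrIn G s w ↔ w ∈ nbrIn G s c :=
  ⟨fun h => ⟨hw, h.2.symm⟩, fun h => ⟨hc, h.2.symm⟩⟩

lemma nbrIn_sdiff_singleton (s : Set V) (c w : V) :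
    nbrIn G (s \ {c}) w = nbrIn G s w \ {c} := by
  ext x
  simp only [nbrIn, Set.mem_sdiff, Set.mem_ofPred_eq]
  tauto

lemma ReachIn.symm (h : ReachIn G s x y) : ReachIn G s y x := by
  induction h with
  | refl => exact .refl
  | tail _ hyz ih => exact .head ⟨hyz.2.1, hyz.1, hyz.2.2.symm⟩ ih

lemma reachIn_of_connected (h : (G.induce s).Connected) (hx : x ∈ s) (hy : y ∈ s) :
    ReachIn G s x y :=
  ((SimpleGraph.reachable_iff_reflTransGen _ _).1 (h.preconnected ⟨x, hx⟩ ⟨y, hy⟩)).lift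
    Subtype.val fun x y hxy => ⟨x.2, y.2, hxy⟩

lemma ReachIn.mem_of_nbrIn_subset {C : Set V} (hC : ∀ x ∈ C, nbrIn G s x ⊆ C)
    (h : ReachIn G s x y) (hx : x ∈ C) : y ∈ C := by
  induction h with
  | refl => exact hx
  | tail _ hyz ih => exact hC _ ih ⟨hyz.2.1, hyz.2.2⟩

lemma ReachIn.sdiff_singleton
    (hc : ∀ w ∈ nbrIn G s c, ∀ w' ∈ nbrIn G s c, ReachIn G (s \ {c}) w w')
    (h : ReachIn G s x y) (hx : x ≠ c) (hy : y ≠ c) : ReachIn G (s \ {c}) x y := by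
  suffices ∀ {x}, ReachIn G s x y → (x ≠ c → ReachIn G (s \ {c}) x y) ∧
      (x = c → ∀ w ∈ nbrIn G s c, ReachIn G (s \ {c}) w y) from (this h).1 hx
  intro x h
  induction h using Relation.ReflTransGen.head_induction_on with
  | refl => exact ⟨fun _ => .refl, fun hyc => absurd hyc hy⟩
  | @head x z hxz _ ih =>
    obtain ⟨hxs, hzs, hadj⟩ := hxz
    constructor
    · intro hxc
      by_cases hzc : z = c
      · subst hzc
        exact ih.2 rfl x ⟨hxs, hadj.symm⟩
      · exact .head ⟨⟨hxs, hxc⟩, ⟨hzs, hzc⟩, hadj⟩ (ih.1 hzc)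
    · rintro rfl w hw
      exact (hc w hw z ⟨hzs, hadj⟩).trans (ih.1 (G.ne_of_adj hadj).symm)

lemma degree_induce_eq_ncard_nbrIn (R : Set V) [Fintype R] [DecidableRel (G.induce R).Adj]
    (x : R) : (G.induce R).degree x = (nbrIn G R x).ncard := by
  rw [← SimpleGraph.card_neighborSet_eq_degree, ← Nat.card_eq_fintype_card, Nat.card_coe_set_eq,
    ← Set.ncard_image_of_injective _ Subtype.val_injective]
  congr 1
  ext y
  simp [nbrIn, and_comm]

/-- Otherwise the component of `a` in `s \ {v}` would be a graph with exactly one vertex of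
odd degree, namely `a`. -/
lemma reachIn_sdiff_singleton_of_two_regular (hs : s.Finite)
    (hreg : ∀ w ∈ s, (nbrIn G s w).ncard = 2) (hv : v ∈ s) (hab : nbrIn G s v = {a, b}) :
    ReachIn G (s \ {v}) a b := by
  have ha : a ∈ nbrIn G s v := hab ▸ Set.mem_insert a {b}
  by_contra hba
  set R : Set V := {x | x ∈ s \ {v} ∧ ReachIn G (s \ {v}) a x}
  have : Fintype R := (hs.subset fun x hx => hx.1.1).fintype
  classical
  have hdeg : ∀ x : R, (G.induce R).degree x = if (x : V) = a then 1 else 2 := by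
    rintro ⟨x, ⟨hxs, hxv⟩, hax⟩
    have hRt : nbrIn G R x = nbrIn G s x \ {v} := by
      rw [← nbrIn_sdiff_singleton]
      ext y
      exact ⟨fun ⟨hy, hxy⟩ => ⟨hy.1, hxy⟩,
        fun ⟨hy, hxy⟩ => ⟨⟨hy, hax.tail ⟨⟨hxs, hxv⟩, hy, hxy⟩⟩, hxy⟩⟩
    rw [degree_induce_eq_ncard_nbrIn, hRt]
    split_ifs with hxa
    · rw [Set.ncard_sdiff_singleton_of_mem ((mem_nbrIn_comm hxs hv).2 (hxa ▸ ha :)), hreg x hxs]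
    · have : v ∉ nbrIn G s x := by
        rw [mem_nbrIn_comm hxs hv, hab]
        rintro (rfl | rfl)
        exacts [hxa rfl, hba hax]
      rw [Set.sdiff_singleton_eq_self this, hreg x hxs]
  have haR : a ∈ R := ⟨⟨ha.1, (G.ne_of_adj ha.2).symm⟩, .refl⟩
  obtain ⟨x, hxa, hodd⟩ := (G.induce R).exists_ne_odd_degree_of_exists_odd_degree ⟨a, haR⟩
    (by rw [hdeg, if_pos rfl]; exact odd_one)
  rw [hdeg, if_neg (fun h => hxa (Subtype.ext h))] at hodd
  exact Nat.not_odd_iff_even.2 even_two hodd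

lemma eq_singleton_of_ncard_eq_one {t : Set V} (ht : t.ncard = 1) (hx : x ∈ t) : t = {x} := by
  obtain ⟨y, rfl⟩ := Set.ncard_eq_one.1 ht
  rw [Set.mem_singleton_iff.1 hx]

lemma IsInducedPath.eq_pair_of_adj (h : IsInducedPath G a b s) (hab : G.Adj a b) :
    s = {a, b} := by
  obtain ⟨ha, hb, -, hconn, hna, hnb, -⟩ := h
  have hna : nbrIn G s a = {b} := eq_singleton_of_ncard_eq_one hna ⟨hb, hab⟩
  have hnb : nbrIn G s b = {a} := eq_singleton_of_ncard_eq_one hnb ⟨ha, hab.symm⟩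
  refine (Set.insert_subset ha (Set.singleton_subset_iff.2 hb)).antisymm' fun x hx => ?_
  refine (hconn a ha x hx).mem_of_nbrIn_subset ?_ (Set.mem_insert a {b})
  rintro z (rfl | rfl)
  · simp [hna]
  · simp [hnb]

lemma IsInducedPath.sdiff_singleton (h : IsInducedPath G a b s) (hab : ¬G.Adj a b)
    (hu : nbrIn G s a = {u}) : IsInducedPath G u b (s \ {a}) := by
  obtain ⟨ha, hb, hne, hconn, -, hnb, hdeg⟩ := h
  have hu' : u ∈ nbrIn G s a := hu ▸ rfl
  have hub : u ≠ b := by rintro rfl; exact hab hu'.2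
  have hua : u ≠ a := (G.ne_of_adj hu'.2).symm
  have ha_nbr : ∀ w ∈ s, a ∈ nbrIn G s w ↔ w = u := fun w hw => by
    rw [mem_nbrIn_comm hw ha, hu]; rfl
  refine ⟨⟨hu'.1, hua⟩, ⟨hb, hne.symm⟩, hub, ?_, ?_, ?_, ?_⟩
  · rintro x ⟨hx, hxa⟩ y ⟨hy, hya⟩
    refine (hconn x hx y hy).sdiff_singleton ?_ hxa hya
    rw [hu]
    rintro w rfl w' rfl
    exact .refl
  · rw [nbrIn_sdiff_singleton, Set.ncard_sdiff_singleton_of_mem ((ha_nbr u hu'.1).2 rfl),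
      hdeg u hu'.1 hua hub]
  · rw [nbrIn_sdiff_singleton, Set.sdiff_singleton_eq_self (mt (ha_nbr b hb).1 hub.symm), hnb]
  · rintro w ⟨hw, hwa⟩ hwu hwb
    rw [nbrIn_sdiff_singleton, Set.sdiff_singleton_eq_self (mt (ha_nbr w hw).1 hwu),
      hdeg w hw hwa hwb]

lemma IsInducedCycle.isInducedPath_sdiff_singleton (h : IsInducedCycle G s) (hv : v ∈ s)
    (hab : nbrIn G s v = {a, b}) : IsInducedPath G a b (s \ {v}) := by
  obtain ⟨hs, -, hconn, hreg⟩ := h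
  have hreg : ∀ w ∈ s, (nbrIn G s w).ncard = 2 := hreg
  have hne : a ≠ b := by
    rintro rfl
    simpa [hab] using hreg v hv
  have ha : a ∈ nbrIn G s v := hab ▸ Set.mem_insert a {b}
  have hb : b ∈ nbrIn G s v := hab ▸ Set.mem_insert_of_mem a rfl
  have hend : ∀ w ∈ nbrIn G s v, (nbrIn G (s \ {v}) w).ncard = 1 := fun w hw => by
    rw [nbrIn_sdiff_singleton, Set.ncard_sdiff_singleton_of_mem ((mem_nbrIn_comm hw.1 hv).2 hw),
      hreg w hw.1]
  have hab' := reachIn_sdiff_singleton_of_two_regular hs hreg hv hab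
  refine ⟨⟨ha.1, (G.ne_of_adj ha.2).symm⟩, ⟨hb.1, (G.ne_of_adj hb.2).symm⟩, hne, ?_,
    hend a ha, hend b hb, ?_⟩
  · rintro x ⟨hx, hxv⟩ y ⟨hy, hyv⟩
    refine (reachIn_of_connected hconn hx hy).sdiff_singleton ?_ hxv hyv
    rw [hab]
    rintro w (rfl | rfl) w' (rfl | rfl)
    exacts [.refl, hab', hab'.symm, .refl]
  · rintro w ⟨hw, -⟩ hwa hwb
    have hvw : v ∉ nbrIn G s w := by
      rw [mem_nbrIn_comm hw hv, hab]
      rintro (rfl | rfl) <;> contradiction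
    rw [nbrIn_sdiff_singleton, Set.sdiff_singleton_eq_self hvw, hreg w hw]

lemma natCast_le_three_rpow (k : ℕ) : (k : ℝ) ≤ 3 ^ ((k : ℝ) / 3) := by
  have hcube : k ^ 3 ≤ 3 ^ k := by
    induction k with
    | zero => norm_num
    | succ k ih =>
      rcases Nat.lt_or_ge k 3 with hk | hk
      · interval_cases k <;> norm_num
      · calc (k + 1) ^ 3 ≤ 3 * k ^ 3 := by nlinarith [sq_nonneg k]
          _ ≤ 3 * 3 ^ k := Nat.mul_le_mul_left 3 ih
          _ = 3 ^ (k + 1) := (pow_succ' 3 k).symm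
  calc (k : ℝ) = ((k : ℝ) ^ 3) ^ ((3 : ℕ)⁻¹ : ℝ) :=
        (Real.pow_rpow_inv_natCast k.cast_nonneg three_ne_zero).symm
    _ ≤ ((3 : ℝ) ^ k) ^ ((3 : ℕ)⁻¹ : ℝ) := by
      gcongr
      exact_mod_cast hcube
    _ = 3 ^ ((k : ℝ) / 3) := by
      rw [← Real.rpow_natCast, ← Real.rpow_mul (by norm_num)]
      norm_num [div_eq_mul_inv]

lemma natCast_mul_three_rpow_le (k : ℕ) (x : ℝ) : k * (3 : ℝ) ^ ((x - k) / 3) ≤ 3 ^ (x / 3) :=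
  calc k * (3 : ℝ) ^ ((x - k) / 3) ≤ 3 ^ ((k : ℝ) / 3) * 3 ^ ((x - k) / 3) := by
        gcongr
        exact natCast_le_three_rpow k
    _ = 3 ^ (x / 3) := by
      rw [← Real.rpow_add (by norm_num)]
      ring_nf

section Counting

open Finset Classical

variable {M : Finset V} {t : Finset V}

noncomputable def inducedPaths (G : SimpleGraph V) (a b : V) (M : Finset V) : Finset (Finset V) :=
  (insert a (insert b M)).powerset.filter fun t => IsInducedPath G a b t

lemma mem_inducedPaths :
    t ∈ inducedPaths G a b M ↔ t ⊆ insert a (insert b M) ∧ IsInducedPath G a b t := by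
  simp [inducedPaths]

lemma card_inducedPaths_le_one_of_adj (hab : G.Adj a b) : (inducedPaths G a b M).card ≤ 1 :=
  card_le_one.2 fun _ ht _ ht' => coe_injective <|
    ((mem_inducedPaths.1 ht).2.eq_pair_of_adj hab).trans
      ((mem_inducedPaths.1 ht').2.eq_pair_of_adj hab).symm

lemma inducedPaths_subset_biUnion (hab : ¬G.Adj a b) :
    inducedPaths G a b M ⊆ (M.filter (G.Adj a)).biUnion fun u =>
      (inducedPaths G u b (M \ M.filter (G.Adj a))).image (insert a) := by
  intro t ht
  obtain ⟨htM, hp⟩ := mem_inducedPaths.1 ht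
  obtain ⟨u, hu⟩ := Set.ncard_eq_one.1 hp.2.2.2.2.1
  have hu' : u ∈ nbrIn G t a := hu ▸ rfl
  have hua : u ≠ a := (G.ne_of_adj hu'.2).symm
  have huM : u ∈ M := by
    have := htM hu'.1
    simp only [mem_insert] at this
    exact this.resolve_left hua |>.resolve_left fun hub => hab (hub ▸ hu'.2)
  refine mem_biUnion.2
    ⟨u, mem_filter.2 ⟨huM, hu'.2⟩, mem_image.2 ⟨t.erase a, ?_, insert_erase hp.1⟩⟩
  refine mem_inducedPaths.2 ⟨fun w hw => ?_, by rw [coe_erase]; exact hp.sdiff_singleton hab hu⟩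
  obtain ⟨hwa, hwt⟩ := mem_erase.1 hw
  have hwu : G.Adj a w → w = u := fun h => by
    have : w ∈ nbrIn G t a := ⟨hwt, h⟩
    rwa [hu] at this
  have := htM hwt
  simp only [mem_insert, mem_sdiff, mem_filter] at this ⊢
  tauto

theorem card_inducedPaths_le (G : SimpleGraph V) (a b : V) (M : Finset V) :
    ((inducedPaths G a b M).card : ℝ) ≤ 3 ^ ((M.card : ℝ) / 3) := by
  induction M using Finset.strongInduction generalizing a with
  | H M ih =>
  by_cases hab : G.Adj a b
  · exact (Nat.cast_le_one.2 (card_inducedPaths_le_one_of_adj hab)).trans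
      (Real.one_le_rpow (by norm_num) (by positivity))
  set K := M.filter (G.Adj a)
  have hK : ∀ u ∈ K,
      ((inducedPaths G u b (M \ K)).card : ℝ) ≤ 3 ^ (((M.card : ℝ) - K.card) / 3) := by
    intro u hu
    have := ih (M \ K) (sdiff_ssubset (filter_subset _ _) ⟨u, hu⟩) u
    rwa [card_sdiff_of_subset (filter_subset _ _),
      Nat.cast_sub (card_le_card (filter_subset _ _))] at this
  calc ((inducedPaths G a b M).card : ℝ)
      ≤ ∑ u ∈ K, ((inducedPaths G u b (M \ K)).card : ℝ) := by
        exact_mod_cast (card_le_card (inducedPaths_subset_biUnion hab)).trans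
          (card_biUnion_le.trans (sum_le_sum fun u _ => card_image_le))
    _ ≤ ∑ u ∈ K, (3 : ℝ) ^ (((M.card : ℝ) - K.card) / 3) := sum_le_sum hK
    _ = K.card * (3 : ℝ) ^ (((M.card : ℝ) - K.card) / 3) := by rw [sum_const, nsmul_eq_mul]
    _ ≤ 3 ^ ((M.card : ℝ) / 3) := natCast_mul_three_rpow_le _ _

variable [Fintype V]

noncomputable def inducedCyclesThrough (G : SimpleGraph V) (v : V) : Finset (Finset V) :=
  univ.filter fun t => IsInducedCycle G t ∧ v ∈ t

lemma numInducedCyclesThrough_eq_card :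
    numInducedCyclesThrough G v = (inducedCyclesThrough G v).card := by
  rw [numInducedCyclesThrough, ← Set.ncard_coe_finset,
    ← Set.ncard_image_of_injective _ coe_injective]
  congr 1
  ext s
  simp only [inducedCyclesThrough, coe_filter, mem_univ, true_and, Set.mem_image,
    Set.mem_ofPred_eq]
  exact ⟨fun hs => ⟨s.toFinite.toFinset, by simpa using hs⟩, fun ⟨t, ht, hts⟩ => hts ▸ ht⟩

lemma coe_inter_neighborFinset : (↑(t ∩ G.neighborFinset v) : Set V) = nbrIn G t v := by
  ext w
  simp [nbrIn]

lemma vdeg_eq_card_neighborFinset (G : SimpleGraph V) (v : V) :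
    vdeg G v = (G.neighborFinset v).card := by
  change Nat.card (G.neighborSet v) = _
  rw [Nat.card_eq_fintype_card, G.card_neighborSet_eq_degree, G.card_neighborFinset_eq_degree]

lemma card_filter_inter_neighborFinset_eq_le :
    ((inducedCyclesThrough G v).filter fun t => t ∩ G.neighborFinset v = {a, b}).card ≤
      (inducedPaths G a b (insert v (G.neighborFinset v))ᶜ).card := by
  refine card_le_card_of_injOn (·.erase v) (fun t ht => ?_) ((erase_injOn' v).mono fun t ht => ?_)
  · obtain ⟨ht, hN⟩ := mem_filter.1 ht
    obtain ⟨hcyc, hv⟩ := (mem_filter.1 ht).2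
    have hnbr : nbrIn G t v = {a, b} := by rw [← coe_inter_neighborFinset, hN, coe_pair]
    refine mem_inducedPaths.2 ⟨fun w hw => ?_, ?_⟩
    · obtain ⟨hwv, hwt⟩ := mem_erase.1 hw
      by_cases hwN : w ∈ G.neighborFinset v
      · have : w ∈ t ∩ G.neighborFinset v := mem_inter.2 ⟨hwt, hwN⟩
        rw [hN] at this
        simp only [mem_insert, mem_singleton] at this ⊢
        tauto
      · simp [hwv, hwN]
    · rw [coe_erase]
      exact hcyc.isInducedPath_sdiff_singleton hv hnbr
  · exact (mem_filter.1 (mem_filter.1 ht).1).2.2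

theorem numInducedCyclesThrough_le (G : SimpleGraph V) (v : V) :
    (numInducedCyclesThrough G v : ℝ) ≤
      ((vdeg G v).choose 2 : ℝ) * 3 ^ (((Fintype.card V : ℝ) - vdeg G v - 1) / 3) := by
  set N := G.neighborFinset v
  have hd : vdeg G v = N.card := vdeg_eq_card_neighborFinset G v
  have hM : (((insert v N)ᶜ : Finset V).card : ℝ) = Fintype.card V - N.card - 1 := by
    rw [card_compl, Nat.cast_sub (card_le_univ _),
      card_insert_of_notMem (G.notMem_neighborFinset_self v)]
    push_cast
    ring
  have hmaps : Set.MapsTo (· ∩ N) (inducedCyclesThrough G v) (N.powersetCard 2) := by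
    intro t ht
    obtain ⟨hcyc, hv⟩ := (mem_filter.1 ht).2
    refine mem_powersetCard.2 ⟨inter_subset_right, ?_⟩
    rw [← Set.ncard_coe_finset, coe_inter_neighborFinset]
    exact hcyc.2.2.2 v hv
  rw [numInducedCyclesThrough_eq_card, card_eq_sum_card_fiberwise hmaps, hd, ← card_powersetCard,
    ← hM, ← nsmul_eq_mul, ← sum_const]
  push_cast
  refine sum_le_sum fun P hP => ?_
  obtain ⟨a, b, -, rfl⟩ := card_eq_two.1 (mem_powersetCard.1 hP).2
  exact (Nat.cast_le.2 card_filter_inter_neighborFinset_eq_le).trans (card_inducedPaths_le ..)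

end Counting

end

/-- Lemma (upper bound): the number of induced cycles through a vertex `v` is at
most `C(d(v),2) · 3^{(n - d(v) - 1)/3}`. -/
theorem inducedCyclesThrough_le :
    ∀ (n : ℕ) (F : SimpleGraph (Fin n)) (v : Fin n),
      (numInducedCyclesThrough F v : ℝ) ≤
        ((vdeg F v).choose 2 : ℝ) * (3 : ℝ) ^ (((n : ℝ) - (vdeg F v : ℝ) - 1) / 3) := by
  intro n F v
  simpa using numInducedCyclesThrough_le F v

end ExtremalInducedCycles
end

section
/- Fix 0 < c ≤ 1. There exists n₀ such that for all n ≥ n₀, every graph F on n vertices with f(F) ≥ c·m(n) contains a vertex v such that f_v(F) ≥ (c/10)·m(n). -/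
namespace ExtremalInducedCycles

/-!
Let `k` be the largest `f_v(F)`. Summing `f_v(F)` over all vertices counts each induced cycle
once per vertex, so at most `9k` induced cycles have more than `n / 9` vertices. Weighting each
vertex set `S` by `8 ^ (n - |S|)` gives total `9 ^ n`, so at most `9 ^ n / 8 ^ (8n/9)` sets have at
most `n / 9` vertices; as `9 ^ 9 < 27 * 8 ^ 8` this is `o(3 ^ (n / 3))`. Blowing up each vertex of a
cycle of length `n / 3` into three independent vertices gives `m(n) ≥ 3 ^ (n / 3)`, so
`f(F) ≥ c m(n)` forces `9k ≥ (9/10) c m(n)` for large `n`.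
-/

open Finset Filter Function SimpleGraph Topology

section SetFamilies

variable {α : Type*}

theorem card_filter_card_le_mul_pow_le [Fintype α] (𝒞 : Finset (Finset α)) (L : ℕ) {b : ℕ}
    (hb : 1 ≤ b) :
    #{C ∈ 𝒞 | #C ≤ L} * b ^ (Fintype.card α - L) ≤ (b + 1) ^ Fintype.card α :=
  calc #{C ∈ 𝒞 | #C ≤ L} * b ^ (Fintype.card α - L)
      = ∑ C ∈ 𝒞 with #C ≤ L, b ^ (Fintype.card α - L) := by rw [sum_const, smul_eq_mul]
    _ ≤ ∑ C ∈ 𝒞 with #C ≤ L, b ^ (Fintype.card α - #C) :=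
      sum_le_sum fun C hC => Nat.pow_le_pow_right hb (by have := (mem_filter.1 hC).2; omega)
    _ ≤ ∑ C : Finset α, 1 ^ #C * b ^ (Fintype.card α - #C) := by
      simp only [one_pow, one_mul]
      exact sum_le_sum_of_subset (subset_univ _)
    _ = (b + 1) ^ Fintype.card α := by rw [Fintype.sum_pow_mul_eq_add_pow, add_comm]

theorem succ_mul_card_filter_lt_card_le_sum_card (𝒞 : Finset (Finset α)) (L : ℕ) :
    (L + 1) * #{C ∈ 𝒞 | L < #C} ≤ ∑ C ∈ 𝒞, #C :=
  calc (L + 1) * #{C ∈ 𝒞 | L < #C} = ∑ C ∈ 𝒞 with L < #C, (L + 1) := by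
        rw [sum_const, smul_eq_mul, mul_comm]
    _ ≤ ∑ C ∈ 𝒞 with L < #C, #C := sum_le_sum fun C hC => (mem_filter.1 hC).2
    _ ≤ ∑ C ∈ 𝒞, #C := sum_le_sum_of_subset (filter_subset _ _)

theorem card_le_pow_div_add_div [Fintype α] [DecidableEq α] (𝒞 : Finset (Finset α)) (L : ℕ)
    {b k : ℕ} (hb : 1 ≤ b) (hk : ∀ a, #{C ∈ 𝒞 | a ∈ C} ≤ k) :
    (#𝒞 : ℝ) ≤ (b + 1) ^ Fintype.card α / b ^ (Fintype.card α - L)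
      + Fintype.card α * k / (L + 1) := by
  have hsmall : (#{C ∈ 𝒞 | #C ≤ L} : ℝ) ≤
      (b + 1) ^ Fintype.card α / b ^ (Fintype.card α - L) := by
    rw [le_div_iff₀ (by positivity)]
    exact_mod_cast card_filter_card_le_mul_pow_le 𝒞 L hb
  have hlarge : (#{C ∈ 𝒞 | ¬#C ≤ L} : ℝ) ≤ Fintype.card α * k / (L + 1) := by
    rw [le_div_iff₀ (by positivity), mul_comm]
    simp only [not_le]
    exact_mod_cast (succ_mul_card_filter_lt_card_le_sum_card 𝒞 L).trans (sum_card_le hk)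
  rw [← card_filter_add_card_filter_not (fun C => #C ≤ L), Nat.cast_add]
  exact add_le_add hsmall hlarge

end SetFamilies

theorem eventually_nine_pow_div_lt {ε : ℝ} (hε : 0 < ε) :
    ∀ᶠ n : ℕ in atTop, (9 : ℝ) ^ n / 8 ^ (n - n / 9) < ε * 3 ^ (n / 3) := by
  set r : ℝ := 9 ^ 9 / (27 * 8 ^ 8)
  have hr : Tendsto (fun q : ℕ => 9 ^ 8 * r ^ q) atTop (𝓝 0) := by
    simpa using (tendsto_pow_atTop_nhds_zero_of_lt_one (by positivity) (by norm_num)).const_mul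
      (9 ^ 8 : ℝ)
  filter_upwards [(Nat.tendsto_div_const_atTop (by norm_num : 9 ≠ 0)).eventually
    (hr.eventually (gt_mem_nhds hε))] with n hn
  calc (9 : ℝ) ^ n / 8 ^ (n - n / 9) ≤ 9 ^ (9 * (n / 9) + 8) / 8 ^ (8 * (n / 9)) := by
        gcongr <;> first | omega | norm_num
    _ = 9 ^ 8 * r ^ (n / 9) * 27 ^ (n / 9) := by
        rw [div_pow, mul_pow, pow_add, pow_mul, pow_mul]
        field_simp
    _ < ε * 27 ^ (n / 9) := by gcongr
    _ = ε * 3 ^ (3 * (n / 9)) := by rw [pow_mul]; norm_num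
    _ ≤ ε * 3 ^ (n / 3) := by gcongr <;> first | omega | norm_num

section InducedCycles

variable {V : Type*}

theorem ncard_setOf_eq_card_filter [Fintype V] (P : Set V → Prop)
    [DecidablePred fun s : Finset V => P s] :
    {s : Set V | P s}.ncard = #{s : Finset V | P s} := by
  have : {s : Set V | P s} = (↑) '' {s : Finset V | P s} := by
    ext s
    exact ⟨fun hs => ⟨s.toFinite.toFinset, by simpa using hs, by simp⟩,
      by rintro ⟨t, ht, rfl⟩; exact ht⟩
  rw [this, Set.ncard_image_of_injective _ Finset.coe_injective, ← Set.ncard_coe_finset]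
  simp

theorem numInducedCycles_le_of_forall_le [Fintype V] [DecidableEq V] (G : SimpleGraph V) {k : ℕ}
    (hk : ∀ v, numInducedCyclesThrough G v ≤ k) :
    (numInducedCycles G : ℝ) ≤
      9 ^ Fintype.card V / 8 ^ (Fintype.card V - Fintype.card V / 9) + 9 * k := by
  classical
  set n := Fintype.card V
  have hdeg : ∀ v, #{C ∈ {s : Finset V | IsInducedCycle G s} | v ∈ C} ≤ k := fun v => by
    simpa [filter_filter, numInducedCyclesThrough, ncard_setOf_eq_card_filter] using hk v
  have hn : (n : ℝ) * k / (n / 9 + 1 : ℕ) ≤ 9 * k := by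
    rw [div_le_iff₀ (by positivity)]
    have : (n : ℝ) ≤ 9 * (n / 9 + 1 : ℕ) := by
      exact_mod_cast (by omega : n ≤ 9 * (n / 9 + 1))
    nlinarith [(k.cast_nonneg : (0 : ℝ) ≤ k)]
  have := card_le_pow_div_add_div _ (n / 9) (b := 8) le_add_self hdeg
  rw [numInducedCycles, ncard_setOf_eq_card_filter]
  push_cast at this hn ⊢
  linarith

theorem isInducedCycle_range {G : SimpleGraph V} {k : ℕ} (f : cycleGraph (k + 3) ↪g G) :
    IsInducedCycle G (Set.range f) := by
  refine ⟨Set.finite_range f, ?_, ?_, ?_⟩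
  · rw [Set.ncard_range_of_injective f.injective, Nat.card_eq_fintype_card, Fintype.card_fin]
    omega
  · let φ : cycleGraph (k + 3) →g G.induce (Set.range f) :=
      ⟨fun i => ⟨f i, i, rfl⟩, fun h => by simpa using h⟩
    refine cycleGraph_connected.map φ ?_
    rintro ⟨_, i, rfl⟩
    exact ⟨i, rfl⟩
  · rintro _ ⟨i, rfl⟩
    have : {w | w ∈ Set.range f ∧ G.Adj (f i) w} =
        f '' (cycleGraph (k + 3)).neighborSet i := by
      ext w
      constructor
      · rintro ⟨⟨j, rfl⟩, h⟩
        exact ⟨j, by simpa using h, rfl⟩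
      · rintro ⟨j, h, rfl⟩
        exact ⟨⟨j, rfl⟩, by simpa using h⟩
    rw [this, Set.ncard_image_of_injective _ f.injective, Set.ncard_eq_toFinset_card',
      ← neighborFinset_def, card_neighborFinset_eq_degree, cycleGraph_degree_three_le]

def comapEmbeddingOfLeftInverse {W : Type*} (H : SimpleGraph W) {p : V → W} {σ : W → V}
    (hσ : LeftInverse p σ) : H ↪g H.comap p where
  toFun := σ
  inj' := hσ.injective
  map_rel_iff' := by simp [hσ _]

theorem eq_of_leftInverse_of_range_eq {W : Type*} {p : V → W} {σ σ' : W → V}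
    (hσ : LeftInverse p σ) (hσ' : LeftInverse p σ') (h : Set.range σ = Set.range σ') :
    σ = σ' := by
  funext i
  obtain ⟨j, hj⟩ : σ i ∈ Set.range σ' := h ▸ Set.mem_range_self i
  obtain rfl : j = i := by rw [← hσ' j, hj, hσ i]
  exact hj.symm

theorem card_le_numInducedCycles_comap [Finite V] {ι : Type*} {k : ℕ} (p : V → Fin (k + 3))
    (σ : ι → Fin (k + 3) → V) (hσ : ∀ i, LeftInverse p (σ i)) (hinj : Injective σ) :
    Nat.card ι ≤ numInducedCycles ((cycleGraph (k + 3)).comap p) := by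
  have hrange : Injective fun i => Set.range (σ i) := fun i j h =>
    hinj (eq_of_leftInverse_of_range_eq (hσ i) (hσ j) h)
  rw [← Set.ncard_range_of_injective hrange]
  refine Set.ncard_le_ncard ?_ (Set.toFinite _)
  rintro _ ⟨i, rfl⟩
  exact isInducedCycle_range (comapEmbeddingOfLeftInverse _ (hσ i))

end InducedCycles

theorem le_maxInducedCycles {n : ℕ} (G : SimpleGraph (Fin n)) :
    numInducedCycles G ≤ maxInducedCycles n :=
  le_csSup ⟨Nat.card (Set (Fin n)), by rintro _ ⟨G, rfl⟩; exact Set.ncard_le_card _⟩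
    ⟨G, rfl⟩

theorem three_pow_le_maxInducedCycles {n : ℕ} (hn : 9 ≤ n) :
    3 ^ (n / 3) ≤ maxInducedCycles n := by
  obtain ⟨k, hk⟩ : ∃ k, n / 3 = k + 3 := ⟨n / 3 - 3, by omega⟩
  -- the at most two vertices beyond `3 * (k + 3)` join the last part
  let p : Fin n → Fin (k + 3) := fun u => ⟨min (u / 3) (k + 2), by omega⟩
  let σ : (Fin (k + 3) → Fin 3) → Fin (k + 3) → Fin n := fun g i =>
    ⟨3 * i + g i, by omega⟩
  have hσ : ∀ g, LeftInverse p (σ g) := fun g i => by ext; simp only [σ, p]; omega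
  have hinj : Injective σ := fun g g' h => by
    funext i
    have := congr_arg Fin.val (congr_fun h i)
    ext
    simp only [Nat.add_left_cancel_iff, σ] at this
    omega
  calc 3 ^ (n / 3) = Nat.card (Fin (k + 3) → Fin 3) := by simp [hk]
    _ ≤ numInducedCycles ((cycleGraph (k + 3)).comap p) :=
      card_le_numInducedCycles_comap p σ hσ hinj
    _ ≤ maxInducedCycles n := le_maxInducedCycles _

/-- Lemma (existence of a popular vertex): any `n`-vertex graph with at least
`c·m(n)` induced cycles has a vertex lying on at least `(c/10)·m(n)` of them. -/
theorem exists_popular_vertex :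
    ∀ c : ℝ, 0 < c → c ≤ 1 →
      ∃ n₀ : ℕ, ∀ n : ℕ, n₀ ≤ n → ∀ F : SimpleGraph (Fin n),
        c * (maxInducedCycles n : ℝ) ≤ (numInducedCycles F : ℝ) →
        ∃ v : Fin n, (c / 10) * (maxInducedCycles n : ℝ) ≤
          (numInducedCyclesThrough F v : ℝ) := by
  intro c hc _
  obtain ⟨n₀, hn₀⟩ := eventually_atTop.mp
    ((eventually_ge_atTop 9).and (eventually_nine_pow_div_lt (by positivity : 0 < c / 10)))
  refine ⟨n₀, fun n hn F hF => ?_⟩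
  obtain ⟨h9, hsmall⟩ := hn₀ n hn
  have : Nonempty (Fin n) := ⟨⟨0, by omega⟩⟩
  obtain ⟨v, hv⟩ := Finite.exists_max (numInducedCyclesThrough F)
  refine ⟨v, ?_⟩
  have hF_le := numInducedCycles_le_of_forall_le F hv
  rw [Fintype.card_fin] at hF_le
  have hm : c / 10 * 3 ^ (n / 3) ≤ c / 10 * (maxInducedCycles n : ℝ) := by
    gcongr
    exact_mod_cast three_pow_le_maxInducedCycles h9
  linarith

end ExtremalInducedCycles
end
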